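/- arXiv:1404.6853 — 3 statements merged into one kernel-verified Lean document; each statement's English description precedes it below -/
import Mathlib

section
/- Let x₁, x₂ ∈ ℝⁿ and positive reals t₁, t₂, α, η satisfy t₁ ≥ α > η, ‖x₁‖² + t₁² = 1, ‖x₂‖² + t₂² ≤ 1, and ‖x₁ - x₂‖² + (t₁ - t₂)² ≤ η². Then ‖x₁/t₁ - x₂/t₂‖² ≤ 4η² / (α²(α - η)²). -/
/-
Split `x₁/t₁ - x₂/t₂ = (x₁ - x₂)/t₁ + (1/t₁ - 1/t₂) x₂`. The first term is at most `η/α`; the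
second is at most `|t₁ - t₂| ‖x₂‖ / (t₁ t₂) ≤ η / (α (α - η))`, because `t₂ ≥ t₁ - η ≥ α - η` and
`‖x₂‖ ≤ 1`. Since `α - η ≤ t₁ ≤ 1`, the first bound is dominated by the second, so the norm is at
most `2η / (α (α - η))`.
-/

lemma abs_le_of_sq_add_sq_le {a b c : ℝ} (hc : 0 ≤ c) (h : a ^ 2 + b ^ 2 ≤ c ^ 2) : |a| ≤ c :=
  abs_le_of_sq_le_sq (by nlinarith [sq_nonneg b]) hc

lemma norm_inv_smul_sub_inv_smul_le {E : Type*} [SeminormedAddCommGroup E] [NormedSpace ℝ E]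
    {t₁ t₂ : ℝ} (ht₁ : 0 < t₁) (ht₂ : 0 < t₂) (x₁ x₂ : E) :
    ‖t₁⁻¹ • x₁ - t₂⁻¹ • x₂‖ ≤ ‖x₁ - x₂‖ / t₁ + |t₁ - t₂| / (t₁ * t₂) * ‖x₂‖ := by
  have hsplit : t₁⁻¹ • x₁ - t₂⁻¹ • x₂ = t₁⁻¹ • (x₁ - x₂) + ((t₂ - t₁) / (t₁ * t₂)) • x₂ := by
    rw [show (t₂ - t₁) / (t₁ * t₂) = t₁⁻¹ - t₂⁻¹ by field_simp, smul_sub, sub_smul]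
    abel
  calc ‖t₁⁻¹ • x₁ - t₂⁻¹ • x₂‖
      ≤ ‖t₁⁻¹ • (x₁ - x₂)‖ + ‖((t₂ - t₁) / (t₁ * t₂)) • x₂‖ := hsplit ▸ norm_add_le _ _
    _ = ‖x₁ - x₂‖ / t₁ + |t₁ - t₂| / (t₁ * t₂) * ‖x₂‖ := by
      rw [norm_smul, norm_smul, Real.norm_eq_abs, Real.norm_eq_abs, abs_div, abs_sub_comm,
        abs_inv, abs_of_pos ht₁, abs_of_pos (mul_pos ht₁ ht₂), inv_mul_eq_div]

theorem stmt_0_general {n : ℕ} (x₁ x₂ : EuclideanSpace ℝ (Fin n)) (t₁ t₂ α η : ℝ)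
    (hη : 0 < η)
    (hαt : α ≤ t₁) (hηα : η < α)
    (h1 : ‖x₁‖ ^ 2 + t₁ ^ 2 = 1) (h2 : ‖x₂‖ ^ 2 + t₂ ^ 2 ≤ 1)
    (h3 : ‖x₁ - x₂‖ ^ 2 + (t₁ - t₂) ^ 2 ≤ η ^ 2) :
    ‖t₁⁻¹ • x₁ - t₂⁻¹ • x₂‖ ^ 2 ≤ 4 * η ^ 2 / (α ^ 2 * (α - η) ^ 2) := by
  have hα : 0 < α := hη.trans hηα
  have hαη : 0 < α - η := sub_pos.mpr hηα
  have hx : ‖x₁ - x₂‖ ≤ η := by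
    simpa using abs_le_of_sq_add_sq_le hη.le h3
  have ht : |t₁ - t₂| ≤ η := abs_le_of_sq_add_sq_le hη.le (by linarith)
  have hx₂ : ‖x₂‖ ≤ 1 := by
    simpa using abs_le_of_sq_add_sq_le zero_le_one (by linarith : ‖x₂‖ ^ 2 + t₂ ^ 2 ≤ 1 ^ 2)
  have ht₁_le : t₁ ≤ 1 := le_of_abs_le <| abs_le_of_sq_add_sq_le zero_le_one
    (by linarith : t₁ ^ 2 + ‖x₁‖ ^ 2 ≤ 1 ^ 2)
  have ht₂_ge : α - η ≤ t₂ := by linarith [le_of_abs_le ht]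
  have ht₁_pos : 0 < t₁ := hα.trans_le hαt
  have ht₂_pos : 0 < t₂ := hαη.trans_le ht₂_ge
  have hsmall : α * (α - η) ≤ α := mul_le_of_le_one_right hα.le (by linarith)
  have hnorm : ‖t₁⁻¹ • x₁ - t₂⁻¹ • x₂‖ ≤ 2 * η / (α * (α - η)) :=
    calc ‖t₁⁻¹ • x₁ - t₂⁻¹ • x₂‖
        ≤ ‖x₁ - x₂‖ / t₁ + |t₁ - t₂| / (t₁ * t₂) * ‖x₂‖ :=
          norm_inv_smul_sub_inv_smul_le ht₁_pos ht₂_pos x₁ x₂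
      _ ≤ η / α + η / (α * (α - η)) * 1 := by gcongr
      _ ≤ η / (α * (α - η)) + η / (α * (α - η)) := by
          rw [mul_one]
          gcongr
      _ = 2 * η / (α * (α - η)) := by ring
  calc ‖t₁⁻¹ • x₁ - t₂⁻¹ • x₂‖ ^ 2 ≤ (2 * η / (α * (α - η))) ^ 2 := by gcongr
    _ = 4 * η ^ 2 / (α ^ 2 * (α - η) ^ 2) := by rw [div_pow, mul_pow, mul_pow]; norm_num

theorem stmt_0 {n : ℕ} (x₁ x₂ : EuclideanSpace ℝ (Fin n)) (t₁ t₂ α η : ℝ)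
    (ht₁ : 0 < t₁) (ht₂ : 0 < t₂) (hα : 0 < α) (hη : 0 < η)
    (hαt : α ≤ t₁) (hηα : η < α)
    (h1 : ‖x₁‖ ^ 2 + t₁ ^ 2 = 1) (h2 : ‖x₂‖ ^ 2 + t₂ ^ 2 ≤ 1)
    (h3 : ‖x₁ - x₂‖ ^ 2 + (t₁ - t₂) ^ 2 ≤ η ^ 2) :
    ‖t₁⁻¹ • x₁ - t₂⁻¹ • x₂‖ ^ 2 ≤ 4 * η ^ 2 / (α ^ 2 * (α - η) ^ 2) :=
  stmt_0_general x₁ x₂ t₁ t₂ α η hη hαt hηα h1 h2 h3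
end

section
/- Let h(u) = 1/erf⁻¹(2u - 1) on (1/2, 1). Then h'(u) = -√π exp((erf⁻¹(2u-1))²) / (erf⁻¹(2u-1))², and |h'| is decreasing on the interval (1/2, (erf(1)+1)/2). -/
/-- The Gaussian error function. -/
noncomputable def erf (x : ℝ) : ℝ :=
  (2 / Real.sqrt Real.pi) * ∫ t in (0:ℝ)..x, Real.exp (-t ^ 2)

/-- The inverse of the Gaussian error function. -/
noncomputable def erfinv : ℝ → ℝ := Function.invFun erf

noncomputable def h (u : ℝ) : ℝ := 1 / erfinv (2 * u - 1)

/-- The claimed derivative of `h`. -/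
noncomputable def h' (u : ℝ) : ℝ :=
  -Real.sqrt Real.pi * Real.exp ((erfinv (2 * u - 1)) ^ 2) / (erfinv (2 * u - 1)) ^ 2

/-!
`erf` is a strictly increasing bijection `ℝ → (-1, 1)` with `erf' x = 2/√π · exp (-x²)`, so by the
inverse function theorem `erfinv' y = √π/2 · exp (erfinv y ^ 2)` on `(-1, 1)`, and the chain rule
gives `h'`. With `x = erfinv (2u - 1)` we get `|h' u| = √π · exp (x²) / x²`, and `x ↦ exp (x²) / x²`
decreases on `(0, 1]` because its derivative is `2x exp (x²) (x² - 1) / x⁴`; on the given interval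
`u ↦ x` is increasing with values in `(0, 1)`.
-/

open Real Set Filter Topology MeasureTheory

lemma hasDerivAt_erf (x : ℝ) : HasDerivAt erf (2 / √π * exp (-x ^ 2)) x := by
  have hcont : Continuous fun t : ℝ => exp (-t ^ 2) := by fun_prop
  exact (hcont.integral_hasStrictDerivAt 0 x).hasDerivAt.const_mul _

lemma continuous_erf : Continuous erf :=
  continuous_iff_continuousAt.2 fun x => (hasDerivAt_erf x).continuousAt

lemma erf_strictMono : StrictMono erf :=
  strictMono_of_deriv_pos fun x => by rw [(hasDerivAt_erf x).deriv]; positivity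

lemma erf_zero : erf 0 = 0 := by simp [erf]

lemma erf_neg (x : ℝ) : erf (-x) = -erf x := by
  have hsymm : ∫ t in (0:ℝ)..-x, exp (-t ^ 2) = -∫ t in (0:ℝ)..x, exp (-t ^ 2) := by
    rw [intervalIntegral.integral_symm, ← neg_zero,
      ← intervalIntegral.integral_comp_neg fun t => exp (-t ^ 2)]
    simp
  rw [erf, erf, hsymm, mul_neg]

lemma tendsto_erf_atTop : Tendsto erf atTop (𝓝 1) := by
  have hint : IntegrableOn (fun t : ℝ => exp (-t ^ 2)) (Ioi 0) := by
    simpa using (integrable_exp_neg_mul_sq one_pos).integrableOn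
  have hlim := (intervalIntegral_tendsto_integral_Ioi 0 hint tendsto_id).const_mul (2 / √π)
  have hval : 2 / √π * ∫ t in Ioi (0:ℝ), exp (-t ^ 2) = 1 := by
    have hgauss : ∫ t in Ioi (0:ℝ), exp (-t ^ 2) = √π / 2 := by
      simpa using integral_gaussian_Ioi 1
    rw [hgauss]
    field_simp
  rw [hval] at hlim
  exact hlim

lemma tendsto_erf_atBot : Tendsto erf atBot (𝓝 (-1)) := by
  refine (tendsto_erf_atTop.comp tendsto_neg_atBot_atTop).neg.congr fun x => ?_
  simp [erf_neg]

lemma erf_mem_Ioo (x : ℝ) : erf x ∈ Ioo (-1) 1 :=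
  ⟨(erf_strictMono.monotone.le_of_tendsto tendsto_erf_atBot (x - 1)).trans_lt
      (erf_strictMono (sub_one_lt x)),
    (erf_strictMono (lt_add_one x)).trans_le
      (erf_strictMono.monotone.ge_of_tendsto tendsto_erf_atTop (x + 1))⟩

lemma range_erf : range erf = Ioo (-1) 1 := by
  refine Subset.antisymm (range_subset_iff.2 erf_mem_Ioo) fun y hy => ?_
  refine mem_range_of_exists_le_of_exists_ge continuous_erf ?_ ?_
  · obtain ⟨a, ha⟩ := (tendsto_erf_atBot.eventually (eventually_lt_nhds hy.1)).exists
    exact ⟨a, ha.le⟩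
  · obtain ⟨b, hb⟩ := (tendsto_erf_atTop.eventually (eventually_gt_nhds hy.2)).exists
    exact ⟨b, hb.le⟩

lemma Ioo_erf_subset_Ioo (a b : ℝ) : Ioo (erf a) (erf b) ⊆ Ioo (-1) 1 :=
  Ioo_subset_Ioo (erf_mem_Ioo a).1.le (erf_mem_Ioo b).2.le

lemma erfinv_erf (x : ℝ) : erfinv (erf x) = x :=
  Function.leftInverse_invFun erf_strictMono.injective x

lemma erf_erfinv {y : ℝ} (hy : y ∈ Ioo (-1) 1) : erf (erfinv y) = y :=
  Function.invFun_eq (show y ∈ range erf by rwa [range_erf])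

lemma strictMonoOn_erfinv : StrictMonoOn erfinv (Ioo (-1) 1) := fun y hy z hz hyz =>
  erf_strictMono.lt_iff_lt.1 (by rwa [erf_erfinv hy, erf_erfinv hz])

lemma image_erfinv : erfinv '' Ioo (-1) 1 = univ :=
  eq_univ_of_forall fun x => ⟨erf x, erf_mem_Ioo x, erfinv_erf x⟩

lemma erfinv_ne_zero {y : ℝ} (hy : y ∈ Ioo (-1) 1) (hy₀ : y ≠ 0) : erfinv y ≠ 0 := fun h₀ =>
  hy₀ (by rw [← erf_erfinv hy, h₀, erf_zero])

lemma erfinv_mem_Ioo {a b y : ℝ} (hy : y ∈ Ioo (erf a) (erf b)) : erfinv y ∈ Ioo a b := by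
  rw [← erf_erfinv (Ioo_erf_subset_Ioo a b hy)] at hy
  exact ⟨erf_strictMono.lt_iff_lt.1 hy.1, erf_strictMono.lt_iff_lt.1 hy.2⟩

lemma continuousAt_erfinv {y : ℝ} (hy : y ∈ Ioo (-1) 1) : ContinuousAt erfinv y :=
  continuousAt_of_monotoneOn_of_image_mem_nhds strictMonoOn_erfinv.monotoneOn
    (isOpen_Ioo.mem_nhds hy) (by rw [image_erfinv]; exact univ_mem)

lemma hasDerivAt_erfinv {y : ℝ} (hy : y ∈ Ioo (-1) 1) :
    HasDerivAt erfinv (√π / 2 * exp (erfinv y ^ 2)) y := by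
  have hinv := HasDerivAt.of_local_left_inverse (continuousAt_erfinv hy)
    (hasDerivAt_erf (erfinv y)) (by positivity)
    (eventually_of_mem (isOpen_Ioo.mem_nhds hy) fun z hz => erf_erfinv hz)
  refine hinv.congr_deriv ?_
  rw [exp_neg]
  field_simp

lemma hasDerivAt_h {u : ℝ} (hu : u ∈ Ioo 0 1) (hu₀ : u ≠ 1 / 2) : HasDerivAt h (h' u) u := by
  have hy : 2 * u - 1 ∈ Ioo (-1) 1 := ⟨by linarith [hu.1], by linarith [hu.2]⟩
  have hx : erfinv (2 * u - 1) ≠ 0 := erfinv_ne_zero hy (by contrapose! hu₀; linarith)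
  have hlin : HasDerivAt (fun u : ℝ => 2 * u - 1) 2 u := by
    simpa using ((hasDerivAt_id u).const_mul 2).sub_const 1
  have hh : h = fun v => (erfinv (2 * v - 1))⁻¹ := funext fun v => one_div _
  rw [hh]
  have hcomp : HasDerivAt (fun v => erfinv (2 * v - 1))
      (√π / 2 * exp (erfinv (2 * u - 1) ^ 2) * 2) u := (hasDerivAt_erfinv hy).comp u hlin
  refine (hcomp.inv hx).congr_deriv ?_
  rw [h']
  ring

lemma abs_h' (u : ℝ) :
    |h' u| = √π * (exp (erfinv (2 * u - 1) ^ 2) / erfinv (2 * u - 1) ^ 2) := by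
  rw [h', neg_mul, neg_div, abs_neg, mul_div_assoc, abs_of_nonneg (by positivity)]

lemma antitoneOn_exp_sq_div_sq : AntitoneOn (fun x : ℝ => exp (x ^ 2) / x ^ 2) (Ioc 0 1) := by
  have hderiv : ∀ x ≠ (0:ℝ), HasDerivAt (fun x : ℝ => exp (x ^ 2) / x ^ 2)
      (2 * x * exp (x ^ 2) * (x ^ 2 - 1) / (x ^ 2) ^ 2) x := by
    intro x hx
    have hsq : HasDerivAt (fun x : ℝ => x ^ 2) (2 * x) x := by simpa using hasDerivAt_pow 2 x
    exact (hsq.exp.div hsq (pow_ne_zero 2 hx)).congr_deriv (by ring)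
  refine (strictAntiOn_of_deriv_neg (convex_Ioc 0 1) (fun x hx => ?_) fun x hx => ?_).antitoneOn
  · exact (hderiv x hx.1.ne').continuousAt.continuousWithinAt
  · rw [interior_Ioc] at hx
    rw [(hderiv x hx.1.ne').deriv]
    have hx2 : x ^ 2 < 1 := by nlinarith [hx.1, hx.2]
    have hpos : 0 < 2 * x * exp (x ^ 2) := by have := hx.1; positivity
    exact div_neg_of_neg_of_pos (mul_neg_of_pos_of_neg hpos (by linarith)) (pow_pos (pow_pos hx.1 2) 2)

theorem stmt_5 :
    (∀ u ∈ Set.Ioo (1 / 2 : ℝ) 1, HasDerivAt h (h' u) u) ∧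
      AntitoneOn (fun u => |h' u|) (Set.Ioo (1 / 2 : ℝ) ((erf 1 + 1) / 2)) := by
  refine ⟨fun u hu => hasDerivAt_h ⟨by linarith [hu.1], hu.2⟩ hu.1.ne', ?_⟩
  have hy : ∀ u ∈ Ioo (1 / 2 : ℝ) ((erf 1 + 1) / 2), 2 * u - 1 ∈ Ioo (erf 0) (erf 1) :=
    fun u hu => by rw [erf_zero]; constructor <;> linarith [hu.1, hu.2]
  intro u₁ hu₁ u₂ hu₂ hle
  have hx₁ := erfinv_mem_Ioo (hy u₁ hu₁)
  have hx₂ := erfinv_mem_Ioo (hy u₂ hu₂)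
  have hx : erfinv (2 * u₁ - 1) ≤ erfinv (2 * u₂ - 1) :=
    strictMonoOn_erfinv.monotoneOn (Ioo_erf_subset_Ioo 0 1 (hy u₁ hu₁))
      (Ioo_erf_subset_Ioo 0 1 (hy u₂ hu₂)) (by linarith)
  simp only [abs_h']
  exact mul_le_mul_of_nonneg_left (antitoneOn_exp_sq_div_sq (Ioo_subset_Ioc_self hx₁)
    (Ioo_subset_Ioc_self hx₂) hx) (sqrt_nonneg π)
end

section
/- Fix 0 < δ < 1/5 and 0 < r ≤ R, and set τ = r. Suppose F = (1/2)(1 + erf(τ/(σ√2))) for some σ ∈ [r, R], and suppose F_m is a real number with |F - F_m| ≤ (1/2)(erf(r/(√2R)) - erf((1-δ)r/(√2R))). Then both F and F_m lie in the interval [(1/2)(1 + erf((1-δ)r/(√2 R))), (1/2)(1 + erf(1))]. -/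
/-!
Put `x = r / (√2 R)` and `y = r / (σ √2)`, so that `0 < x ≤ y ≤ 1 / √2`. The claims about `F`
follow from the monotonicity of `erf`, and those about `F_m` reduce to
`erf x - erf ((1 - δ) x) ≤ erf 1 - erf y`. As `exp (-t²)` decreases on `[0, ∞)`, the left side is
at most `2 / √π · (x / 5) · exp (-(4x/5)²)` and the right side at least
`2 / √π · (1 - y) · exp (-1)`; comparing the two is a numerical inequality.
-/

open Real

lemma intervalIntegrable_exp_neg_sq (a b : ℝ) :
    IntervalIntegrable (fun t : ℝ => exp (-t ^ 2)) MeasureTheory.volume a b :=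
  (by fun_prop : Continuous fun t : ℝ => exp (-t ^ 2)).intervalIntegrable a b

lemma erf_sub_erf (a b : ℝ) : erf b - erf a = 2 / √π * ∫ t in a..b, exp (-t ^ 2) := by
  rw [erf, erf, ← mul_sub, intervalIntegral.integral_interval_sub_left
    (intervalIntegrable_exp_neg_sq 0 b) (intervalIntegrable_exp_neg_sq 0 a)]

lemma erf_monotone : Monotone erf := fun a b hab => by
  have := erf_sub_erf a b
  have : 0 ≤ ∫ t in a..b, exp (-t ^ 2) :=
    intervalIntegral.integral_nonneg hab fun t _ => (exp_pos _).le
  nlinarith [show 0 ≤ 2 / √π by positivity]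

lemma antitoneOn_exp_neg_sq : AntitoneOn (fun t : ℝ => exp (-t ^ 2)) (Set.Ici 0) :=
  fun _ ha _ _ hab => exp_le_exp.2 (neg_le_neg (pow_le_pow_left₀ ha hab 2))

lemma erf_sub_erf_le {a b : ℝ} (ha : 0 ≤ a) (hab : a ≤ b) :
    erf b - erf a ≤ 2 / √π * ((b - a) * exp (-a ^ 2)) := by
  rw [erf_sub_erf, ← smul_eq_mul (b - a), ← intervalIntegral.integral_const]
  gcongr
  refine intervalIntegral.integral_mono_on hab (intervalIntegrable_exp_neg_sq a b)
    intervalIntegrable_const fun t ht => antitoneOn_exp_neg_sq ha (ha.trans ht.1) ht.1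

lemma le_erf_sub_erf {a b : ℝ} (ha : 0 ≤ a) (hab : a ≤ b) :
    2 / √π * ((b - a) * exp (-b ^ 2)) ≤ erf b - erf a := by
  rw [erf_sub_erf, ← smul_eq_mul (b - a), ← intervalIntegral.integral_const]
  gcongr
  refine intervalIntegral.integral_mono_on hab intervalIntegrable_const
    (intervalIntegrable_exp_neg_sq a b) fun t ht =>
      antitoneOn_exp_neg_sq (ha.trans ht.1) (ha.trans hab) ht.2

lemma div_five_mul_exp_neg_sq_le {x y : ℝ} (hx : 0 ≤ x) (hx2 : x ^ 2 ≤ 1 / 2)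
    (hy2 : y ^ 2 ≤ 1 / 2) :
    x / 5 * exp (-(4 / 5 * x) ^ 2) ≤ (1 - y) * exp (-1) := by
  set v := (4 / 5 * x) ^ 2 with hv
  have hy : y ≤ 17 / 24 := by nlinarith
  -- `exp v ≥ 1 + v + v² / 2`, `e < 2.72` and `y ≤ 17 / 24` leave a polynomial inequality in `x`.
  rw [exp_neg, exp_neg, ← div_eq_mul_inv, ← div_eq_mul_inv,
    div_le_div_iff₀ (exp_pos _) (exp_pos _)]
  calc x / 5 * exp 1 ≤ x / 5 * 2.72 := by gcongr; linarith [exp_one_lt_d9]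
    _ ≤ 7 / 24 * (1 + v + v ^ 2 / 2) := by
      rw [hv]; nlinarith [sq_nonneg (x - 7 / 10), sq_nonneg (x ^ 2 - 1 / 2)]
    _ ≤ (1 - y) * exp v :=
      mul_le_mul (by linarith) (quadratic_le_exp_of_nonneg (by positivity)) (by positivity)
        (by linarith)

lemma erf_sub_erf_mul_le {x y c : ℝ} (hx : 0 ≤ x) (hx2 : x ^ 2 ≤ 1 / 2) (hc : 4 / 5 ≤ c)
    (hy : 0 ≤ y) (hy2 : y ^ 2 ≤ 1 / 2) : erf x - erf (c * x) ≤ erf 1 - erf y :=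
  calc erf x - erf (c * x) ≤ erf x - erf (4 / 5 * x) := by
        gcongr; exact erf_monotone (mul_le_mul_of_nonneg_right hc hx)
    _ ≤ 2 / √π * ((x - 4 / 5 * x) * exp (-(4 / 5 * x) ^ 2)) :=
        erf_sub_erf_le (by positivity) (by linarith)
    _ = 2 / √π * (x / 5 * exp (-(4 / 5 * x) ^ 2)) := by ring
    _ ≤ 2 / √π * ((1 - y) * exp (-1 ^ 2)) := by
        rw [one_pow]
        exact mul_le_mul_of_nonneg_left (div_five_mul_exp_neg_sq_le hx hx2 hy2) (by positivity)
    _ ≤ erf 1 - erf y := le_erf_sub_erf hy (by nlinarith)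

theorem stmt_13_general (r R δ σ Fm : ℝ) (hδ0 : 0 < δ) (hδ : δ < 1 / 5)
    (hr : 0 < r) (hσ : σ ∈ Set.Icc r R)
    (hFm : |(1 / 2) * (1 + erf (r / (σ * Real.sqrt 2))) - Fm| ≤
      (1 / 2) * (erf (r / (Real.sqrt 2 * R)) - erf ((1 - δ) * r / (Real.sqrt 2 * R)))) :
    (1 / 2) * (1 + erf (r / (σ * Real.sqrt 2))) ∈
        Set.Icc ((1 / 2) * (1 + erf ((1 - δ) * r / (Real.sqrt 2 * R))))
          ((1 / 2) * (1 + erf 1)) ∧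
      Fm ∈ Set.Icc ((1 / 2) * (1 + erf ((1 - δ) * r / (Real.sqrt 2 * R))))
        ((1 / 2) * (1 + erf 1)) := by
  obtain ⟨hσr, hσR⟩ := hσ
  have hσ0 : 0 < σ := hr.trans_le hσr
  have hR0 : 0 < R := hσ0.trans_le hσR
  rw [mul_div_assoc] at hFm ⊢
  set x := r / (√2 * R)
  set y := r / (σ * √2)
  have hx : 0 < x := by positivity
  have hxy : x ≤ y :=
    div_le_div_of_nonneg_left hr.le (by positivity) (by rw [mul_comm]; gcongr)
  have hy2 : y ^ 2 ≤ 1 / 2 := by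
    rw [div_pow, mul_pow, sq_sqrt zero_le_two, div_le_iff₀ (by positivity)]; nlinarith
  have hkey : erf x - erf ((1 - δ) * x) ≤ erf 1 - erf y :=
    erf_sub_erf_mul_le hx.le (by nlinarith) (by linarith) (hx.le.trans hxy) hy2
  have herf_cx : erf ((1 - δ) * x) ≤ erf x := erf_monotone (by nlinarith)
  have herf_xy : erf x ≤ erf y := erf_monotone hxy
  have herf_y : erf y ≤ erf 1 := erf_monotone (by nlinarith)
  rw [abs_le] at hFm
  constructor <;> constructor <;> linarith

theorem stmt_13 (r R δ σ Fm : ℝ) (hδ0 : 0 < δ) (hδ : δ < 1 / 5)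
    (hr : 0 < r) (hrR : r ≤ R) (hσ : σ ∈ Set.Icc r R)
    (hFm : |(1 / 2) * (1 + erf (r / (σ * Real.sqrt 2))) - Fm| ≤
      (1 / 2) * (erf (r / (Real.sqrt 2 * R)) - erf ((1 - δ) * r / (Real.sqrt 2 * R)))) :
    (1 / 2) * (1 + erf (r / (σ * Real.sqrt 2))) ∈
        Set.Icc ((1 / 2) * (1 + erf ((1 - δ) * r / (Real.sqrt 2 * R))))
          ((1 / 2) * (1 + erf 1)) ∧
      Fm ∈ Set.Icc ((1 / 2) * (1 + erf ((1 - δ) * r / (Real.sqrt 2 * R))))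
        ((1 / 2) * (1 + erf 1)) :=
  stmt_13_general r R δ σ Fm hδ0 hδ hr hσ hFm
end
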